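/- arXiv:1008.3761 — 3 statements merged into one kernel-verified Lean document; each statement's English description precedes it below -/
import Mathlib

section
/- For every λ > 0, the Laplace transform identity ∫_0^∞ e^{−λs} · (a/√(2π s³)) · e^{−a²/(2s)} ds = e^{−√(2λ) a} holds for every a > 0. -/
open MeasureTheory Set

/-!
Substituting `s = a² / u²` turns the integral into `(2 / √(2π)) e^{-c} ∫₀^∞ e^{-(u - c/u)²/2} du`
with `c = √(2λ) a`. The last integral is half the Gaussian integral `√(2π)` (Cauchy–Schlömilch):
the involution `u ↦ c / u` of `(0, ∞)` only flips the sign of `u - c / u`, so the integral equals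
that of `(c / u²) e^{-(u - c/u)²/2}`, and adding the two gives the integral over `ℝ` after the
substitution `t = u - c / u`, whose Jacobian is `1 + c / u²`.
-/

section Substitution

variable {E : Type*} [NormedAddCommGroup E] [NormedSpace ℝ E]

theorem integral_Ioi_comp_div_pow (f : ℝ → E) {b : ℝ} (hb : 0 < b) {n : ℕ} (hn : n ≠ 0) :
    ∫ u in Ioi 0, (n * b / u ^ (n + 1)) • f (b / u ^ n) = ∫ s in Ioi 0, f s := by
  have hp : (-n : ℝ) ≠ 0 := neg_ne_zero.2 (Nat.cast_ne_zero.2 hn)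
  have hrpow := integral_comp_rpow_Ioi (fun y => f (b * y)) hp
  have hscale := integral_comp_mul_left_Ioi' f 0 hb
  rw [mul_zero] at hscale
  rw [← hscale, ← hrpow, ← integral_smul]
  refine setIntegral_congr_fun measurableSet_Ioi fun u hu => ?_
  have hu : 0 < u := hu
  have hpow_succ : u ^ ((-n : ℝ) - 1) = (u ^ (n + 1))⁻¹ := by
    rw [← Real.rpow_natCast, ← Real.rpow_neg hu.le]; push_cast; ring_nf
  have hpow : u ^ (-n : ℝ) = (u ^ n)⁻¹ := by
    rw [Real.rpow_neg hu.le, Real.rpow_natCast]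
  simp only [hpow_succ, hpow, abs_neg, Nat.abs_cast, smul_smul, div_eq_mul_inv]
  congr 1
  ring

theorem hasDerivAt_sub_div (c : ℝ) {u : ℝ} (hu : u ≠ 0) :
    HasDerivAt (fun u => u - c / u) (1 + c / u ^ 2) u := by
  simp only [div_eq_mul_inv]
  refine ((hasDerivAt_id' u).sub ((hasDerivAt_inv hu).const_mul c)).congr_deriv ?_
  ring

theorem strictMonoOn_sub_div {c : ℝ} (hc : 0 ≤ c) : StrictMonoOn (fun u => u - c / u) (Ioi 0) :=
  fun x hx y _ hxy => by
    have : c / y ≤ c / x := div_le_div_of_nonneg_left hc hx hxy.le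
    dsimp only; linarith

theorem image_sub_div_Ioi {c : ℝ} (hc : 0 < c) : (fun u => u - c / u) '' Ioi 0 = univ := by
  refine eq_univ_of_forall fun t => ?_
  have hroot : |t| < √(t ^ 2 + 4 * c) := by
    rw [← Real.sqrt_sq_eq_abs]; exact Real.sqrt_lt_sqrt (sq_nonneg t) (by linarith)
  have hpos : 0 < (t + √(t ^ 2 + 4 * c)) / 2 := by linarith [neg_abs_le t]
  refine ⟨_, hpos, ?_⟩
  have hsq := Real.sq_sqrt (show 0 ≤ t ^ 2 + 4 * c by positivity)
  rw [sub_eq_iff_eq_add', ← sub_eq_iff_eq_add, eq_div_iff hpos.ne']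
  linear_combination hsq / 4

theorem integral_Ioi_comp_sub_div {c : ℝ} (hc : 0 < c) {g : ℝ → E} (hg : Integrable g)
    (hg_even : ∀ t, g (-t) = g t) :
    ∫ u in Ioi 0, g (u - c / u) = (2 : ℝ)⁻¹ • ∫ t, g t := by
  have hφ' : ∀ u ∈ Ioi (0 : ℝ), HasDerivWithinAt (fun u => u - c / u) (1 + c / u ^ 2) (Ioi 0) u :=
    fun u hu => (hasDerivAt_sub_div c (mem_Ioi.1 hu).ne').hasDerivWithinAt
  have hinj := (strictMonoOn_sub_div hc.le).injOn
  have habs : ∀ u ∈ Ioi (0 : ℝ), |1 + c / u ^ 2| = 1 + c / u ^ 2 :=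
    fun u _ => abs_of_pos (by positivity)
  have hsum : ∫ t, g t = ∫ u in Ioi 0, (1 + c / u ^ 2) • g (u - c / u) := by
    rw [← setIntegral_univ, ← image_sub_div_Ioi hc,
      integral_image_eq_integral_abs_deriv_smul measurableSet_Ioi hφ' hinj]
    exact setIntegral_congr_fun measurableSet_Ioi fun u hu => by rw [habs u hu]
  have hint : IntegrableOn (fun u => (1 + c / u ^ 2) • g (u - c / u)) (Ioi 0) := by
    refine ((integrableOn_image_iff_integrableOn_abs_deriv_smul measurableSet_Ioi hφ' hinj g).1
      ?_).congr_fun (fun u hu => by dsimp only; rw [habs u hu]) measurableSet_Ioi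
    rw [image_sub_div_Ioi hc]
    exact hg.integrableOn
  have hint₁ : IntegrableOn (fun u => g (u - c / u)) (Ioi 0) := by
    refine IntegrableOn.congr_fun (hint.bdd_smul 1 (φ := fun u => (1 + c / u ^ 2)⁻¹)
      (Measurable.aestronglyMeasurable (by fun_prop)) ?_) (fun u hu => ?_) measurableSet_Ioi
    · filter_upwards [ae_restrict_mem measurableSet_Ioi] with u hu
      rw [Real.norm_eq_abs, abs_inv, habs u hu]
      exact inv_le_one_of_one_le₀ (le_add_of_nonneg_right (by positivity))
    · simp only [Pi.smul_apply', smul_smul]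
      rw [inv_mul_cancel₀ (by positivity), one_smul]
  have hint₂ : IntegrableOn (fun u => (c / u ^ 2) • g (u - c / u)) (Ioi 0) :=
    (hint.sub hint₁).congr_fun
      (fun u _ => by simp only [Pi.sub_apply, add_smul, one_smul, add_sub_cancel_left])
      measurableSet_Ioi
  have hinvolution : ∫ u in Ioi 0, (c / u ^ 2) • g (u - c / u) = ∫ u in Ioi 0, g (u - c / u) := by
    rw [← integral_Ioi_comp_div_pow (fun u => g (u - c / u)) hc one_ne_zero]
    refine setIntegral_congr_fun measurableSet_Ioi fun u hu => ?_
    have hu : u ≠ 0 := (mem_Ioi.1 hu).ne'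
    rw [← hg_even]
    congr 2
    · simp
    · field_simp; ring
  calc ∫ u in Ioi 0, g (u - c / u)
      = (2 : ℝ)⁻¹ •
          ((∫ u in Ioi 0, g (u - c / u)) + ∫ u in Ioi 0, (c / u ^ 2) • g (u - c / u)) := by
        rw [hinvolution, ← two_smul ℝ, smul_smul, inv_mul_cancel₀ two_ne_zero, one_smul]
    _ = (2 : ℝ)⁻¹ • ∫ t, g t := by
        simp only [hsum, ← integral_add hint₁ hint₂, add_smul, one_smul]

end Substitution

theorem exp_neg_mul_div_sq_mul_exp {lam a c u : ℝ} (ha : a ≠ 0) (hu : u ≠ 0)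
    (hc : c ^ 2 = 2 * lam * a ^ 2) :
    Real.exp (-lam * (a ^ 2 / u ^ 2)) * Real.exp (-a ^ 2 / (2 * (a ^ 2 / u ^ 2)))
      = Real.exp (-c) * Real.exp (-(1 / 2) * (u - c / u) ^ 2) := by
  rw [← Real.exp_add, ← Real.exp_add]
  congr 1
  field_simp
  linear_combination hc

theorem sqrt_two_pi_mul_div_sq_pow_three {a u : ℝ} (ha : 0 < a) (hu : 0 < u) :
    √(2 * Real.pi * (a ^ 2 / u ^ 2) ^ 3) = √(2 * Real.pi) * a ^ 3 / u ^ 3 := by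
  rw [show (a ^ 2 / u ^ 2) ^ 3 = (a ^ 3 / u ^ 3) ^ 2 by ring, Real.sqrt_mul (by positivity),
    Real.sqrt_sq (by positivity), mul_div_assoc]

theorem integral_exp_neg_half_mul_sq : ∫ t : ℝ, Real.exp (-(1 / 2) * t ^ 2) = √(2 * Real.pi) := by
  rw [integral_gaussian]; congr 1; ring

theorem first_passage_integrand_comp_div_sq {lam a c u : ℝ} (ha : 0 < a) (hu : 0 < u)
    (hc : c ^ 2 = 2 * lam * a ^ 2) :
    ((2 : ℕ) * a ^ 2 / u ^ (2 + 1)) •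
        (Real.exp (-lam * (a ^ 2 / u ^ 2)) * (a / √(2 * Real.pi * (a ^ 2 / u ^ 2) ^ 3)) *
          Real.exp (-a ^ 2 / (2 * (a ^ 2 / u ^ 2))))
      = 2 / √(2 * Real.pi) * Real.exp (-c) * Real.exp (-(1 / 2) * (u - c / u) ^ 2) := by
  rw [sqrt_two_pi_mul_div_sq_pow_three ha hu, smul_eq_mul, mul_assoc (2 / _), ←
    exp_neg_mul_div_sq_mul_exp ha.ne' hu.ne' hc]
  have : 0 < √(2 * Real.pi) := by positivity
  field_simp
  push_cast
  ring

/-- Laplace transform of the first passage time density: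
`∫_0^∞ e^{-λs} (a/√(2πs³)) e^{-a²/(2s)} ds = e^{-√(2λ) a}`. -/
theorem laplace_first_passage (lam a : ℝ) (hlam : 0 < lam) (ha : 0 < a) :
    ∫ s in Ioi (0:ℝ),
        Real.exp (-lam * s) * (a / Real.sqrt (2 * Real.pi * s ^ 3)) *
          Real.exp (-a ^ 2 / (2 * s))
      = Real.exp (-(Real.sqrt (2 * lam)) * a) := by
  rw [neg_mul]
  set c := √(2 * lam) * a
  have hc : 0 < c := by positivity
  have hc_sq : c ^ 2 = 2 * lam * a ^ 2 := by rw [mul_pow, Real.sq_sqrt (by positivity)]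
  rw [← integral_Ioi_comp_div_pow _ (pow_pos ha 2) two_ne_zero,
    setIntegral_congr_fun measurableSet_Ioi
      (fun u hu => first_passage_integrand_comp_div_sq ha hu hc_sq),
    integral_const_mul, integral_Ioi_comp_sub_div hc (integrable_exp_neg_mul_sq (by norm_num))
      (fun t => by rw [neg_sq]), integral_exp_neg_half_mul_sq, smul_eq_mul]
  have : 0 < √(2 * Real.pi) := by positivity
  field_simp
end

section
/- Let L : [0,∞) → [0,∞) be continuous nondecreasing with L(0)=0, γ > 0, S ≥ 0, and let τ be the inverse of τ⁻¹(t) = t + γL(t). Define L^s(t) = L(τ(t)), ζ = inf{t ≥ 0 : L(t) > S} and ζ_γ = inf{t ≥ 0 : L^s(t) > S}. Then ζ_γ = ζ + γ·L(ζ) whenever ζ < ∞, and if additionally L is unbounded then L(ζ) = S, hence ζ_γ = ζ + γS. -/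
open Set

/-! `τ` is the inverse of the continuous increasing map `g t = t + γ L t`, so the set of times at
which the time-changed path exceeds `S` is the image under `g` of the corresponding set for `L`,
and `g` commutes with `sInf`. If `L` is unbounded, that set is nonempty and continuity forces
`L ζ = S` at its infimum `ζ`: `L ≥ S` on the closure of the set and `L ≤ S` on `[0, ζ)`. -/

theorem image_setOf_eq_setOf_comp {α : Type*} {s : Set α} {g τ : α → α} (P : α → Prop)
    (hg : MapsTo g s s) (hτ : MapsTo τ s s) (hτg : LeftInvOn τ g s) (hgτ : LeftInvOn g τ s) :
    g '' {t | t ∈ s ∧ P t} = {t | t ∈ s ∧ P (τ t)} := by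
  ext t
  constructor
  · rintro ⟨x, ⟨hx, hPx⟩, rfl⟩
    exact ⟨hg hx, by rwa [hτg hx]⟩
  · rintro ⟨ht, hPt⟩
    exact ⟨τ t, ⟨hτ ht, hPt⟩, hgτ ht⟩

theorem apply_sInf_setOf_lt_eq {L : ℝ → ℝ} {a S : ℝ} (hLc : ContinuousOn L (Ici a))
    (ha : L a ≤ S) (hne : {t | a ≤ t ∧ S < L t}.Nonempty) :
    L (sInf {t | a ≤ t ∧ S < L t}) = S := by
  set A := {t | a ≤ t ∧ S < L t}
  have hbdd : BddBelow A := ⟨a, fun _ ht => ht.1⟩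
  have ha_le : a ≤ sInf A := le_csInf hne fun _ ht => ht.1
  have hge : S ≤ L (sInf A) := by
    have hclosed : IsClosed (Ici a ∩ L ⁻¹' Ici S) :=
      hLc.preimage_isClosed_of_isClosed isClosed_Ici isClosed_Ici
    exact (hclosed.closure_subset_iff.2 (fun t ht => ⟨ht.1, ht.2.le⟩)
      (csInf_mem_closure hne hbdd)).2
  have hle : L (sInf A) ≤ S := by
    rcases ha_le.eq_or_lt with h | h
    · rwa [← h]
    have hclosed : IsClosed (Ici a ∩ L ⁻¹' Iic S) :=
      hLc.preimage_isClosed_of_isClosed isClosed_Ici isClosed_Iic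
    have hsub : Ico a (sInf A) ⊆ Ici a ∩ L ⁻¹' Iic S := fun t ht =>
      ⟨ht.1, not_lt.1 fun hSt => (csInf_le hbdd ⟨ht.1, hSt⟩).not_gt ht.2⟩
    have hmem : sInf A ∈ closure (Ico a (sInf A)) := by
      rw [closure_Ico h.ne]
      exact right_mem_Icc.2 h.le
    exact (hclosed.closure_subset_iff.2 hsub hmem).2
  exact le_antisymm hle hge

theorem MonotoneOn.map_csInf_of_continuousOn {α β : Type*}
    [ConditionallyCompleteLinearOrder α] [TopologicalSpace α] [OrderTopology α]
    [ConditionallyCompleteLinearOrder β] [TopologicalSpace β] [OrderTopology β]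
    {g : α → β} {s A : Set α} (hgm : MonotoneOn g s) (hgc : ContinuousOn g s) (hs : IsClosed s)
    (hA : A ⊆ s) (hne : A.Nonempty) (hbdd : BddBelow A) :
    g (sInf A) = sInf (g '' A) :=
  have hmem : sInf A ∈ s := hs.closure_subset_iff.2 hA (csInf_mem_closure hne hbdd)
  MonotoneOn.map_csInf_of_continuousWithinAt ((hgc _ hmem).mono hA) (hgm.mono hA) hne hbdd

/-- Deterministic content of Lemma gen_lem1: the killing time of the time-changed path
equals the killing time of the original path shifted by `γ L(ζ)`, and `L(ζ) = S` when
`L` is unbounded. -/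
theorem sticky_killing_time (L : ℝ → ℝ) (hLc : ContinuousOn L (Ici 0))
    (hLm : MonotoneOn L (Ici 0)) (hL0 : L 0 = 0)
    (γ S : ℝ) (hγ : 0 < γ) (hS : 0 ≤ S)
    (τ : ℝ → ℝ) (hτmap : MapsTo τ (Ici 0) (Ici 0))
    (hτ1 : ∀ t ∈ Ici (0:ℝ), τ (t + γ * L t) = t)
    (hτ2 : ∀ t ∈ Ici (0:ℝ), τ t + γ * L (τ t) = t)
    (ζ ζγ : ℝ)
    (hζ : ζ = sInf {t : ℝ | 0 ≤ t ∧ S < L t})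
    (hζγ : ζγ = sInf {t : ℝ | 0 ≤ t ∧ S < L (τ t)}) :
    ({t : ℝ | 0 ≤ t ∧ S < L t}.Nonempty → ζγ = ζ + γ * L ζ) ∧
    (Filter.Tendsto L Filter.atTop Filter.atTop → L ζ = S ∧ ζγ = ζ + γ * S) := by
  subst hζ hζγ
  set A := {t : ℝ | 0 ≤ t ∧ S < L t}
  set g : ℝ → ℝ := fun t => t + γ * L t
  have hg_maps : MapsTo g (Ici 0) (Ici 0) := fun t (ht : 0 ≤ t) => by
    have hLt : 0 ≤ L t := hL0 ▸ hLm self_mem_Ici ht ht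
    exact add_nonneg ht (mul_nonneg hγ.le hLt)
  have hB : {t : ℝ | 0 ≤ t ∧ S < L (τ t)} = g '' A :=
    (image_setOf_eq_setOf_comp (fun t => S < L t) hg_maps hτmap hτ1 hτ2).symm
  have hgm : MonotoneOn g (Ici 0) := fun x hx y hy hxy =>
    add_le_add hxy (mul_le_mul_of_nonneg_left (hLm hx hy hxy) hγ.le)
  have hgc : ContinuousOn g (Ici 0) := continuousOn_id.add (continuousOn_const.mul hLc)
  have hA : A ⊆ Ici 0 := fun _ ht => ht.1
  have hshift (hne : A.Nonempty) : sInf (g '' A) = g (sInf A) :=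
    (hgm.map_csInf_of_continuousOn hgc isClosed_Ici hA hne ⟨0, hA⟩).symm
  rw [hB]
  refine ⟨hshift, fun htop => ?_⟩
  have hne : A.Nonempty :=
    ((Filter.eventually_ge_atTop 0).and (htop.eventually_gt_atTop S)).exists
  have hLζ : L (sInf A) = S := apply_sInf_setOf_lt_eq hLc (hL0.trans_le hS) hne
  exact ⟨hLζ, by rw [hshift hne, ← hLζ]⟩
end

section
/- Let a > 0, b ≥ 0, and let f : [0,∞) → ℝ be bounded measurable. Define K_{a,b}f(t) = √(a/(2π)) ∫_0^t ((s+b)/(t−s)^{3/2}) exp(−a(s+b)²/(2(t−s))) f(s) ds for t > 0. Then the Laplace transform satisfies ∫_0^∞ e^{−λt} K_{a,b}f(t) dt = e^{−√(2aλ) b} · ∫_0^∞ e^{−(λ+√(2aλ))s} f(s) ds for every λ > 0. -/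
/-!
Exchanging the order of integration over the triangle `0 < s < t` (Fubini, justified by Tonelli
since the kernel is nonnegative and `f` is bounded) reduces the claim to the Laplace transform of
the Lévy density, `∫₀^∞ e^{-λt} √(a/2π) d t^{-3/2} e^{-a d²/(2t)} dt = e^{-√(2aλ) d}`, taken from
time `s` on and with `d = s + b`. The substitution `t = u⁻²` turns it into the Glasser integral
`∫₀^∞ e^{-αu² - β/u²} du = √(π/α)/2 · e^{-2√(αβ)}`; writing the exponent as
`-(√α u - √β/u)² - 2√(αβ)`, the Cauchy–Schlömilch substitution `v = √α u - √β/u` reduces that to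
the Gaussian integral.
-/

open MeasureTheory Set Real Function

theorem hasDerivAt_const_div {k u : ℝ} (hu : u ≠ 0) :
    HasDerivAt (fun u => k / u) (-(k / u ^ 2)) u := by
  simpa [div_eq_mul_inv] using (hasDerivAt_inv hu).const_mul k

variable {E : Type*} [NormedAddCommGroup E]

theorem integrableOn_Ioi_comp_sub_iff (g : ℝ → E) (s : ℝ) :
    IntegrableOn (fun t => g (t - s)) (Ioi s) ↔ IntegrableOn g (Ioi 0) := by
  simpa [preimage_sub_const_Ioi, Function.comp_def] using
    (measurePreserving_sub_right volume s).integrableOn_comp_preimage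
    (measurableEmbedding_subRight s) (f := g) (s := Ioi 0)

variable [NormedSpace ℝ E]

theorem integral_Ioi_comp_sub (g : ℝ → E) (s : ℝ) :
    ∫ t in Ioi s, g (t - s) = ∫ t in Ioi 0, g t := by
  simpa [preimage_sub_const_Ioi] using
    (measurePreserving_sub_right volume s).setIntegral_preimage_emb
    (measurableEmbedding_subRight s) g (Ioi 0)

theorem integral_Ioi_comp_div (g : ℝ → E) {k : ℝ} (hk : 0 < k) :
    ∫ u in Ioi 0, g (k / u) = ∫ u in Ioi 0, (k / u ^ 2) • g u := by
  have himage : (fun u : ℝ => k / u) '' Ioi 0 = Ioi 0 := by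
    refine Subset.antisymm (image_subset_iff.2 fun u hu => div_pos hk hu) fun v hv => ?_
    exact ⟨k / v, div_pos hk hv, div_div_cancel₀ hk.ne'⟩
  have hinj : InjOn (fun u : ℝ => k / u) (Ioi 0) := fun x _ y _ h =>
    by simpa [div_eq_mul_inv, hk.ne'] using h
  rw [← himage, integral_image_eq_integral_abs_deriv_smul measurableSet_Ioi
    (fun u hu => (hasDerivAt_const_div (mem_Ioi.1 hu).ne').hasDerivWithinAt) hinj, himage]
  refine setIntegral_congr_fun measurableSet_Ioi fun u (hu : 0 < u) => ?_
  rw [abs_neg, abs_of_pos (by positivity), div_div_cancel₀ hk.ne']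

section MulSubDiv

variable {p q : ℝ}

theorem hasDerivWithinAt_mul_sub_div {u : ℝ} (hu : 0 < u) :
    HasDerivWithinAt (fun u => p * u - q / u) (p + q / u ^ 2) (Ioi 0) u := by
  have := ((hasDerivAt_id u).const_mul p).sub (hasDerivAt_const_div (k := q) hu.ne')
  rw [mul_one, sub_neg_eq_add] at this
  exact this.hasDerivWithinAt

theorem strictMonoOn_mul_sub_div (hp : 0 < p) (hq : 0 < q) :
    StrictMonoOn (fun u => p * u - q / u) (Ioi 0) := fun x (hx : 0 < x) y _ hxy => by
  have : q / y < q / x := div_lt_div_of_pos_left hq hx hxy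
  dsimp only
  nlinarith

theorem image_mul_sub_div_Ioi (hp : 0 < p) (hq : 0 < q) :
    (fun u => p * u - q / u) '' Ioi 0 = univ := by
  refine eq_univ_of_forall fun w => ?_
  have hr : w ^ 2 < w ^ 2 + 4 * p * q := by nlinarith [mul_pos hp hq]
  set r := √(w ^ 2 + 4 * p * q)
  have hr2 : r ^ 2 = w ^ 2 + 4 * p * q := sq_sqrt (by positivity)
  have hwr : 0 < w + r := by
    have := abs_lt_of_sq_lt_sq' (show w ^ 2 < r ^ 2 by rwa [hr2]) (sqrt_nonneg _)
    linarith
  refine ⟨(w + r) / (2 * p), div_pos hwr (by positivity), ?_⟩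
  field_simp
  nlinarith

theorem integrableOn_Ioi_deriv_smul_comp_mul_sub_div {F : ℝ → E} (hF : Integrable F)
    (hp : 0 < p) (hq : 0 < q) :
    IntegrableOn (fun u => (p + q / u ^ 2) • F (p * u - q / u)) (Ioi 0) := by
  refine (integrableOn_image_iff_integrableOn_deriv_smul_of_monotoneOn measurableSet_Ioi
    (fun u hu => hasDerivWithinAt_mul_sub_div hu) (strictMonoOn_mul_sub_div hp hq).monotoneOn
    F).1 ?_
  rwa [image_mul_sub_div_Ioi hp hq, integrableOn_univ]

theorem integral_Ioi_deriv_smul_comp_mul_sub_div (F : ℝ → E) (hp : 0 < p) (hq : 0 < q) :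
    ∫ u in Ioi 0, (p + q / u ^ 2) • F (p * u - q / u) = ∫ v, F v := by
  rw [← integral_image_eq_integral_deriv_smul_of_monotoneOn measurableSet_Ioi
    (fun u hu => hasDerivWithinAt_mul_sub_div hu) (strictMonoOn_mul_sub_div hp hq).monotoneOn,
    image_mul_sub_div_Ioi hp hq, Measure.restrict_univ]

theorem integrableOn_Ioi_comp_mul_sub_div {F : ℝ → E} (hF : Integrable F)
    (hp : 0 < p) (hq : 0 < q) : IntegrableOn (fun u => F (p * u - q / u)) (Ioi 0) := by
  refine IntegrableOn.congr_fun ((integrableOn_Ioi_deriv_smul_comp_mul_sub_div hF hp hq).bdd_smul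
    p⁻¹ (φ := fun u => (p + q / u ^ 2)⁻¹) ?_ ?_) (fun u (hu : 0 < u) => ?_) measurableSet_Ioi
  · exact (measurable_const.add (measurable_const.div (measurable_id.pow_const 2))).inv
      |>.aestronglyMeasurable
  · filter_upwards [ae_restrict_mem measurableSet_Ioi] with u (hu : 0 < u)
    rw [norm_inv, Real.norm_of_nonneg (by positivity)]
    exact inv_anti₀ hp (le_add_of_nonneg_right (by positivity))
  · simp [smul_smul, inv_mul_cancel₀ (show p + q / u ^ 2 ≠ 0 by positivity)]

/-- The Cauchy–Schlömilch substitution. -/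
theorem integral_Ioi_comp_mul_sub_div {F : ℝ → E} (hF : Integrable F) (hFeven : F.Even)
    (hp : 0 < p) (hq : 0 < q) :
    ∫ u in Ioi 0, F (p * u - q / u) = (2 * p)⁻¹ • ∫ v, F v := by
  set B := ∫ u in Ioi 0, F (p * u - q / u)
  -- the inversion `u ↦ (q / p) / u` changes the sign of `p * u - q / u`
  have hreflect : B = ∫ u in Ioi 0, (q / p / u ^ 2) • F (p * u - q / u) := by
    rw [← integral_Ioi_comp_div _ (div_pos hq hp)]
    refine setIntegral_congr_fun measurableSet_Ioi fun u (hu : 0 < u) => ?_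
    rw [← hFeven]
    congr 1
    field_simp
    ring
  have hB : p • B = (∫ v, F v) - p • B := calc
    p • B = ∫ u in Ioi 0, (q / u ^ 2) • F (p * u - q / u) := by
      rw [hreflect, ← integral_smul]
      refine setIntegral_congr_fun measurableSet_Ioi fun u (hu : 0 < u) => ?_
      rw [smul_smul]
      field_simp
    _ = ∫ u in Ioi 0, ((p + q / u ^ 2) • F (p * u - q / u) - p • F (p * u - q / u)) := by
      simp only [add_smul, add_sub_cancel_left]
    _ = (∫ v, F v) - p • B := by
      rw [integral_sub (g := fun u => p • F (p * u - q / u))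
        (integrableOn_Ioi_deriv_smul_comp_mul_sub_div hF hp hq)
        ((integrableOn_Ioi_comp_mul_sub_div hF hp hq).smul p), integral_smul,
        integral_Ioi_deriv_smul_comp_mul_sub_div F hp hq]
  rw [eq_sub_iff_add_eq, ← add_smul, ← two_mul] at hB
  exact (eq_inv_smul_iff₀ (by positivity)).2 hB

end MulSubDiv

section Glasser

variable {α β : ℝ}

theorem exp_neg_mul_sq_sub_div_sq (hα : 0 ≤ α) (hβ : 0 ≤ β) {u : ℝ} (hu : u ≠ 0) :
    exp (-(α * u ^ 2) - β / u ^ 2) = exp (-2 * √(α * β)) * exp (-(√α * u - √β / u) ^ 2) := by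
  rw [← exp_add, sqrt_mul hα]
  congr 1
  field_simp
  linear_combination (u ^ 4) * sq_sqrt hα + sq_sqrt hβ

theorem integrableOn_Ioi_exp_neg_mul_sq_sub_div_sq (hα : 0 < α) (hβ : 0 < β) :
    IntegrableOn (fun u => exp (-(α * u ^ 2) - β / u ^ 2)) (Ioi 0) := by
  refine IntegrableOn.congr_fun (((integrableOn_Ioi_comp_mul_sub_div
    (integrable_exp_neg_mul_sq one_pos) (sqrt_pos.2 hα) (sqrt_pos.2 hβ))).const_mul
    (exp (-2 * √(α * β)))) (fun u (hu : 0 < u) => ?_) measurableSet_Ioi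
  simp [exp_neg_mul_sq_sub_div_sq hα.le hβ.le hu.ne']

theorem integral_Ioi_exp_neg_mul_sq_sub_div_sq (hα : 0 < α) (hβ : 0 < β) :
    ∫ u in Ioi 0, exp (-(α * u ^ 2) - β / u ^ 2) = √(π / α) / 2 * exp (-2 * √(α * β)) := by
  have hGauss := integral_Ioi_comp_mul_sub_div (F := fun v => exp (-1 * v ^ 2))
    (integrable_exp_neg_mul_sq one_pos) (fun v => by simp) (sqrt_pos.2 hα) (sqrt_pos.2 hβ)
  rw [integral_gaussian, div_one] at hGauss
  rw [setIntegral_congr_fun measurableSet_Ioi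
    fun u (hu : 0 < u) => exp_neg_mul_sq_sub_div_sq hα.le hβ.le hu.ne', integral_const_mul]
  simp only [neg_one_mul] at hGauss
  rw [hGauss, sqrt_div' _ hα.le, smul_eq_mul]
  field_simp

end Glasser

/-- The density of the first time a Brownian motion of variance `1 / a` reaches level `d`. -/
noncomputable def levyDensity (a d t : ℝ) : ℝ :=
  √(a / (2 * π)) * (d / t ^ ((3 : ℝ) / 2) * exp (-a * d ^ 2 / (2 * t)))

section Levy

variable {a d lam : ℝ}

theorem levyDensity_nonneg (hd : 0 ≤ d) {t : ℝ} (ht : 0 ≤ t) : 0 ≤ levyDensity a d t := by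
  unfold levyDensity; positivity

theorem abs_mul_rpow_smul_exp_neg_mul_levyDensity {x : ℝ} (hx : 0 < x) :
    (|(-2 : ℝ)| * x ^ ((-2 : ℝ) - 1)) • (exp (-lam * x ^ (-2 : ℝ)) * levyDensity a d (x ^ (-2 : ℝ)))
      = 2 * √(a / (2 * π)) * d * exp (-(a * d ^ 2 / 2 * x ^ 2) - lam / x ^ 2) := by
  have h2 : x ^ (-2 : ℝ) = (x ^ 2)⁻¹ := by rw [rpow_neg hx.le]; norm_cast
  have h3 : x ^ ((-2 : ℝ) - 1) = (x ^ 3)⁻¹ := by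
    rw [show (-2 : ℝ) - 1 = -3 by norm_num, rpow_neg hx.le]; norm_cast
  have h32 : (x ^ (-2 : ℝ)) ^ ((3 : ℝ) / 2) = (x ^ 3)⁻¹ := by
    rw [← rpow_mul hx.le, show (-2 : ℝ) * (3 / 2) = -3 by norm_num, rpow_neg hx.le]; norm_cast
  rw [levyDensity, h32, h3, h2, smul_eq_mul, sub_eq_add_neg, exp_add]
  field_simp
  norm_num

theorem integrableOn_Ioi_exp_neg_mul_levyDensity (ha : 0 < a) (hd : 0 < d) (hlam : 0 < lam) :
    IntegrableOn (fun t => exp (-lam * t) * levyDensity a d t) (Ioi 0) := by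
  rw [← integrableOn_Ioi_comp_rpow_iff _ (by norm_num : (-2 : ℝ) ≠ 0)]
  refine IntegrableOn.congr_fun ((integrableOn_Ioi_exp_neg_mul_sq_sub_div_sq
    (by positivity : 0 < a * d ^ 2 / 2) hlam).const_mul (2 * √(a / (2 * π)) * d))
    (fun x (hx : 0 < x) => ?_) measurableSet_Ioi
  rw [abs_mul_rpow_smul_exp_neg_mul_levyDensity hx]

theorem integral_Ioi_exp_neg_mul_levyDensity (ha : 0 < a) (hd : 0 < d) (hlam : 0 < lam) :
    ∫ t in Ioi 0, exp (-lam * t) * levyDensity a d t = exp (-√(2 * a * lam) * d) := by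
  rw [← integral_comp_rpow_Ioi _ (by norm_num : (-2 : ℝ) ≠ 0),
    setIntegral_congr_fun measurableSet_Ioi
      fun x (hx : 0 < x) => abs_mul_rpow_smul_exp_neg_mul_levyDensity hx,
    integral_const_mul, integral_Ioi_exp_neg_mul_sq_sub_div_sq (by positivity) hlam]
  have hsqrt : √(a / (2 * π)) * √(π / (a * d ^ 2 / 2)) * d = 1 := by
    rw [← sqrt_mul (by positivity), show a / (2 * π) * (π / (a * d ^ 2 / 2)) = (d⁻¹) ^ 2 by
      field_simp, sqrt_sq (by positivity), inv_mul_cancel₀ hd.ne']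
  have hexp : -2 * √(a * d ^ 2 / 2 * lam) = -√(2 * a * lam) * d := by
    rw [show a * d ^ 2 / 2 * lam = (√(2 * a * lam) * d / 2) ^ 2 by
      rw [div_pow, mul_pow, sq_sqrt (by positivity)]; ring, sqrt_sq (by positivity)]
    ring
  rw [hexp]
  linear_combination exp (-√(2 * a * lam) * d) * hsqrt

theorem exp_neg_mul_mul_levyDensity_sub (a d lam s t : ℝ) :
    exp (-lam * t) * levyDensity a d (t - s)
      = exp (-lam * s) * (exp (-lam * (t - s)) * levyDensity a d (t - s)) := by
  rw [← mul_assoc, ← exp_add]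
  ring_nf

theorem integrableOn_Ioi_exp_neg_mul_levyDensity_sub (ha : 0 < a) (hd : 0 < d) (hlam : 0 < lam)
    (s : ℝ) : IntegrableOn (fun t => exp (-lam * t) * levyDensity a d (t - s)) (Ioi s) := by
  simp_rw [exp_neg_mul_mul_levyDensity_sub a d lam s]
  exact ((integrableOn_Ioi_comp_sub_iff _ s).2
    (integrableOn_Ioi_exp_neg_mul_levyDensity ha hd hlam)).const_mul _

theorem integral_Ioi_exp_neg_mul_levyDensity_sub (ha : 0 < a) (hd : 0 < d) (hlam : 0 < lam)
    (s : ℝ) : ∫ t in Ioi s, exp (-lam * t) * levyDensity a d (t - s)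
      = exp (-lam * s) * exp (-√(2 * a * lam) * d) := by
  simp_rw [exp_neg_mul_mul_levyDensity_sub a d lam s, integral_const_mul,
    integral_Ioi_comp_sub (fun r => exp (-lam * r) * levyDensity a d r),
    integral_Ioi_exp_neg_mul_levyDensity ha hd hlam]

theorem integral_Ioi_exp_neg_mul_levyDensity_add_sub {b s : ℝ} (ha : 0 < a) (hlam : 0 < lam)
    (hsb : 0 < s + b) : ∫ t in Ioi s, exp (-lam * t) * levyDensity a (s + b) (t - s)
      = exp (-√(2 * a * lam) * b) * exp (-(lam + √(2 * a * lam)) * s) := by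
  rw [integral_Ioi_exp_neg_mul_levyDensity_sub ha hsb hlam, ← exp_add, ← exp_add]
  ring_nf

end Levy

section Triangle

variable {K : ℝ → ℝ → ℝ} {f : ℝ → ℝ}

theorem ite_lt_eq_indicator_Ioi (g : ℝ → ℝ) (s : ℝ) :
    (fun t => if s < t then g t else 0) = (Ioi s).indicator g := by
  ext t; simp [indicator, mem_Ioi]

theorem setIntegral_Ioi_ite_lt {s : ℝ} (hs : 0 ≤ s) :
    ∫ t in Ioi 0, (if s < t then K s t * f s else 0) = (∫ t in Ioi s, K s t) * f s := by
  rw [ite_lt_eq_indicator_Ioi, setIntegral_indicator measurableSet_Ioi, inter_eq_right.2 (Ioi_subset_Ioi hs),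
    integral_mul_const]

theorem integrable_prod_ite_lt (hK : Measurable (uncurry K)) (hf : Measurable f)
    (hK_nonneg : ∀ s t, 0 < s → s < t → 0 ≤ K s t)
    (hK_int : ∀ s, 0 < s → IntegrableOn (K s) (Ioi s))
    (h_int : IntegrableOn (fun s => (∫ t in Ioi s, K s t) * f s) (Ioi 0)) :
    Integrable (uncurry fun s t => if s < t then K s t * f s else 0)
      ((volume.restrict (Ioi 0)).prod (volume.restrict (Ioi 0))) := by
  have hmeas : Measurable (uncurry fun s t => if s < t then K s t * f s else 0) :=
    Measurable.ite (measurableSet_lt measurable_fst measurable_snd)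
      (hK.mul (hf.comp measurable_fst)) measurable_const
  refine (integrable_prod_iff hmeas.aestronglyMeasurable).2 ⟨?_, ?_⟩
  · filter_upwards [ae_restrict_mem measurableSet_Ioi] with s (hs : 0 < s)
    simp only [uncurry_apply_pair, ite_lt_eq_indicator_Ioi]
    rw [integrable_indicator_iff measurableSet_Ioi, IntegrableOn,
      Measure.restrict_restrict measurableSet_Ioi, inter_eq_left.2 (Ioi_subset_Ioi hs.le)]
    exact (hK_int s hs).mul_const _
  · refine IntegrableOn.congr_fun h_int.norm (fun s (hs : 0 < s) => ?_) measurableSet_Ioi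
    have hnorm : ∀ t, ‖uncurry (fun s t => if s < t then K s t * f s else 0) (s, t)‖
        = if s < t then K s t * |f s| else 0 := fun t => by
      split_ifs with hst
      · simp [hst, abs_of_nonneg (hK_nonneg s t hs hst)]
      · simp [hst]
    simp only [hnorm, setIntegral_Ioi_ite_lt (f := (|f ·|)) hs.le, Real.norm_eq_abs, abs_mul,
      abs_of_nonneg (setIntegral_nonneg measurableSet_Ioi fun t ht => hK_nonneg s t hs ht)]

theorem integral_Ioi_integral_Ioo_mul_eq (hK : Measurable (uncurry K)) (hf : Measurable f)
    (hK_nonneg : ∀ s t, 0 < s → s < t → 0 ≤ K s t)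
    (hK_int : ∀ s, 0 < s → IntegrableOn (K s) (Ioi s))
    (h_int : IntegrableOn (fun s => (∫ t in Ioi s, K s t) * f s) (Ioi 0)) :
    ∫ t in Ioi 0, ∫ s in Ioo 0 t, K s t * f s = ∫ s in Ioi 0, (∫ t in Ioi s, K s t) * f s := by
  calc ∫ t in Ioi 0, ∫ s in Ioo 0 t, K s t * f s
      = ∫ t in Ioi 0, ∫ s in Ioi 0, (if s < t then K s t * f s else 0) := by
        refine setIntegral_congr_fun measurableSet_Ioi fun t _ => ?_
        have : (fun s => if s < t then K s t * f s else 0)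
            = (Iio t).indicator fun s => K s t * f s := by
          ext s; simp [indicator, mem_Iio]
        rw [this, setIntegral_indicator measurableSet_Iio, Ioi_inter_Iio]
    _ = ∫ s in Ioi 0, ∫ t in Ioi 0, (if s < t then K s t * f s else 0) :=
        (integral_integral_swap (integrable_prod_ite_lt hK hf hK_nonneg hK_int h_int)).symm
    _ = ∫ s in Ioi 0, (∫ t in Ioi s, K s t) * f s :=
        setIntegral_congr_fun measurableSet_Ioi fun s hs =>
          setIntegral_Ioi_ite_lt (le_of_lt hs)

end Triangle

/-- Lemma a_LTHK_lem1: the Laplace transform of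
`K_{a,b}f(t) = √(a/2π) ∫_0^t ((s+b)/(t−s)^{3/2}) exp(−a(s+b)²/(2(t−s))) f(s) ds`
equals `e^{−√(2aλ)b} ∫_0^∞ e^{−(λ+√(2aλ))s} f(s) ds`. -/
theorem laplace_of_K (a b lam : ℝ) (ha : 0 < a) (hb : 0 ≤ b) (hlam : 0 < lam)
    (f : ℝ → ℝ) (hmeas : Measurable f) (hbd : ∃ C, ∀ s, |f s| ≤ C) :
    ∫ t in Ioi (0:ℝ), Real.exp (-lam * t) *
        (Real.sqrt (a / (2 * Real.pi)) * ∫ s in Ioo (0:ℝ) t,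
          ((s + b) / (t - s) ^ ((3:ℝ)/2)) *
            Real.exp (-a * (s + b) ^ 2 / (2 * (t - s))) * f s)
    = Real.exp (-(Real.sqrt (2 * a * lam)) * b) *
        ∫ s in Ioi (0:ℝ), Real.exp (-(lam + Real.sqrt (2 * a * lam)) * s) * f s := by
  obtain ⟨C, hC⟩ := hbd
  set m := √(2 * a * lam)
  set K : ℝ → ℝ → ℝ := fun s t => exp (-lam * t) * levyDensity a (s + b) (t - s)
  have hsb : ∀ s, 0 < s → 0 < s + b := fun s hs => by linarith
  have hK : ∀ s, 0 < s → ∫ t in Ioi s, K s t = exp (-m * b) * exp (-(lam + m) * s) :=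
    fun s hs => integral_Ioi_exp_neg_mul_levyDensity_add_sub ha hlam (hsb s hs)
  have hKf_int : IntegrableOn (fun s => (∫ t in Ioi s, K s t) * f s) (Ioi 0) := by
    have hexp := exp_neg_integrableOn_Ioi 0 (b := lam + m) (by positivity)
    refine IntegrableOn.congr_fun ((hexp.mul_bdd hmeas.aestronglyMeasurable (c := C)
      (.of_forall hC)).const_mul (exp (-m * b))) (fun s hs => ?_) measurableSet_Ioi
    rw [hK s hs, mul_assoc]
  calc _ = ∫ t in Ioi 0, ∫ s in Ioo 0 t, K s t * f s := by
        refine setIntegral_congr_fun measurableSet_Ioi fun t _ => ?_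
        rw [← integral_const_mul, ← integral_const_mul]
        congr 1 with s
        simp only [K, levyDensity]
        ring
    _ = ∫ s in Ioi 0, (∫ t in Ioi s, K s t) * f s :=
        integral_Ioi_integral_Ioo_mul_eq (by unfold K levyDensity; fun_prop) hmeas
          (fun s t hs hst => mul_nonneg (exp_pos _).le
            (levyDensity_nonneg (hsb s hs).le (sub_nonneg.2 hst.le)))
          (fun s hs => integrableOn_Ioi_exp_neg_mul_levyDensity_sub ha (hsb s hs) hlam s) hKf_int
    _ = ∫ s in Ioi 0, exp (-m * b) * (exp (-(lam + m) * s) * f s) :=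
        setIntegral_congr_fun measurableSet_Ioi fun s hs => by rw [hK s hs, mul_assoc]
    _ = _ := integral_const_mul _ _
end
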